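/- Let d ≥ 2, 0 < p ≤ 1, and let ρ_m = p|φ_d⟩⟨φ_d| + ((1−p)/d) I_d, where |φ_d⟩ = (1/√d) Σ_{i=0}^{d−1} |i⟩. Then the modified trace distance coherence and the trace-norm mixedness satisfy the complementarity relation C'_tr(ρ_m) + M_tr(ρ_m) = 1. -/

import Mathlib

/-!
Write `J = |φ_d⟩⟨φ_d|`. Then `ρ_m - c I = a J + b (1 - J)` with real `a, b`, and for such a
combination `|A| = |a| J + |b| (1 - J)`; this gives `M_tr(ρ_m) = 1 - p` and
`‖ρ_m - (1 - p) I / d‖_tr = p`. Conversely `‖A‖_tr ≥ Re Tr (B A)` for Hermitian `A` and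
`-1 ≤ B ≤ 1`. For `A = ρ_m - λ δ` with `δ` diagonal of unit trace, `Tr (J δ) = 1 / d`, and the
choice `B = 1` (when `λ ≤ 1 - p`) or `B = 2 J - 1` (otherwise) gives `‖A‖_tr ≥ p`.
-/

open Matrix
open scoped ComplexOrder

/-- The trace norm of a matrix `A`: `‖A‖_tr = Tr √(AᴴA)`. -/
noncomputable def traceNorm {d : ℕ} (A : Matrix (Fin d) (Fin d) ℂ) : ℝ :=
  (((Matrix.posSemidef_conjTranspose_mul_self A).1.eigenvectorUnitary.1 *
      diagonal (((↑) : ℝ → ℂ) ∘ (√·) ∘ (Matrix.posSemidef_conjTranspose_mul_self A).1.eigenvalues) *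
      (star (Matrix.posSemidef_conjTranspose_mul_self A).1.eigenvectorUnitary :
        Matrix (Fin d) (Fin d) ℂ)).trace).re

/-- The maximally coherent state `|φ_d⟩ = (1/√d) Σ_i |i⟩`. -/
noncomputable def phi (d : ℕ) : Fin d → ℂ :=
  fun _ => ((Real.sqrt d : ℂ))⁻¹

/-- The maximally coherent mixed state `ρ_m = p|φ_d⟩⟨φ_d| + ((1−p)/d) I_d`. -/
noncomputable def mcms (d : ℕ) (p : ℝ) : Matrix (Fin d) (Fin d) ℂ :=
  p • Matrix.vecMulVec (phi d) (star (phi d)) + ((1 - p) / d : ℝ) • 1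

open scoped MatrixOrder

section Projection

variable {n : Type*} [Fintype n]

theorem isStarProjection_vecMulVec_star {v : n → ℂ} (hv : star v ⬝ᵥ v = 1) :
    IsStarProjection (vecMulVec v (star v)) where
  isIdempotentElem := by
    rw [IsIdempotentElem, vecMulVec_mul_vecMulVec, hv, one_smul]
  isSelfAdjoint := by
    rw [IsSelfAdjoint, star_eq_conjTranspose, conjTranspose_vecMulVec, star_star]

namespace IsStarProjection

variable [DecidableEq n] {P : Matrix n n ℂ}

theorem isHermitian_smul_add_smul_one_sub (hP : IsStarProjection P) (a b : ℝ) :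
    (a • P + b • (1 - P)).IsHermitian :=
  ((IsSelfAdjoint.all a).smul hP.isSelfAdjoint).add
    ((IsSelfAdjoint.all b).smul hP.one_sub.isSelfAdjoint)

theorem smul_add_smul_one_sub_mul_self (hP : IsStarProjection P) (a b : ℝ) :
    (a • P + b • (1 - P)) * (a • P + b • (1 - P)) = (a * a) • P + (b * b) • (1 - P) := by
  simp only [add_mul, mul_add, smul_mul_smul_comm, hP.isIdempotentElem.eq,
    hP.one_sub.isIdempotentElem.eq, hP.isIdempotentElem.mul_one_sub_self,
    hP.isIdempotentElem.one_sub_mul_self, smul_zero, add_zero, zero_add]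

theorem smul_add_smul_one_sub_nonneg (hP : IsStarProjection P) {a b : ℝ} (ha : 0 ≤ a)
    (hb : 0 ≤ b) : 0 ≤ a • P + b • (1 - P) :=
  add_nonneg (smul_nonneg ha hP.nonneg) (smul_nonneg hb hP.one_sub_nonneg)

end IsStarProjection

end Projection

section TraceNorm

variable {d : ℕ}

theorem traceNorm_eq_re_trace_abs (A : Matrix (Fin d) (Fin d) ℂ) :
    traceNorm A = (CFC.abs A).trace.re := by
  have hA := posSemidef_conjTranspose_mul_self A
  rw [CFC.abs, star_eq_conjTranspose, CFC.sqrt_eq_real_sqrt _ hA.nonneg,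
    cfcₙ_eq_cfc (hf0 := Real.sqrt_zero), hA.1.cfc_eq]
  rfl

theorem traceNorm_eq_re_trace_of_mul_self_eq {A S : Matrix (Fin d) (Fin d) ℂ} (hS : 0 ≤ S)
    (h : S * S = Aᴴ * A) : traceNorm A = S.trace.re := by
  rw [traceNorm_eq_re_trace_abs, CFC.abs, star_eq_conjTranspose, CFC.sqrt_unique h hS]

theorem traceNorm_eq_sum_abs_eigenvalues {A : Matrix (Fin d) (Fin d) ℂ} (hA : A.IsHermitian) :
    traceNorm A = ∑ i, |hA.eigenvalues i| := by
  rw [traceNorm_eq_re_trace_abs, CFC.abs_eq_cfc_norm A hA.isSelfAdjoint, hA.cfc_eq,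
    IsHermitian.cfc, Unitary.conjStarAlgAut_apply, trace_mul_cycle, Unitary.coe_star_mul_self,
    one_mul, trace_diagonal, Complex.re_sum]
  simp

theorem re_trace_mul_le_traceNorm {A B : Matrix (Fin d) (Fin d) ℂ} (hA : A.IsHermitian)
    (hB₁ : -1 ≤ B) (hB₂ : B ≤ 1) : (B * A).trace.re ≤ traceNorm A := by
  set U : Matrix (Fin d) (Fin d) ℂ := (hA.eigenvectorUnitary : Matrix (Fin d) (Fin d) ℂ)
  set C := star U * B * U
  have hU : star U * U = 1 := Unitary.coe_star_mul_self _
  have hC₁ : -1 ≤ C := by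
    simpa [C, hU] using star_left_conjugate_le_conjugate hB₁ U
  have hC₂ : C ≤ 1 := by
    simpa [C, hU] using star_left_conjugate_le_conjugate hB₂ U
  have hC (i : Fin d) : |(C i i).re| ≤ 1 := by
    have h₁ := (le_iff.mp hC₁).diag_nonneg (i := i)
    have h₂ := (le_iff.mp hC₂).diag_nonneg (i := i)
    simp only [Matrix.sub_apply, Matrix.neg_apply, one_apply_eq, Complex.nonneg_iff,
      Complex.sub_re, Complex.neg_re, Complex.one_re] at h₁ h₂
    exact abs_le.mpr ⟨by linarith [h₁.1], by linarith [h₂.1]⟩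
  have htr : (B * A).trace = ∑ i, C i i * hA.eigenvalues i := by
    conv_lhs => rw [hA.spectral_theorem, Unitary.conjStarAlgAut_apply]
    rw [← mul_assoc, trace_mul_cycle, ← mul_assoc]
    simp only [trace, diag_apply, mul_diagonal, Function.comp_apply]; rfl
  rw [traceNorm_eq_sum_abs_eigenvalues hA, htr, Complex.re_sum]
  refine Finset.sum_le_sum fun i _ => ?_
  calc (C i i * hA.eigenvalues i).re = (C i i).re * hA.eigenvalues i := by simp
    _ ≤ |(C i i).re| * |hA.eigenvalues i| := by rw [← abs_mul]; exact le_abs_self _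
    _ ≤ |hA.eigenvalues i| := mul_le_of_le_one_left (abs_nonneg _) (hC i)

theorem IsStarProjection.traceNorm_smul_add_smul_one_sub {P : Matrix (Fin d) (Fin d) ℂ}
    (hP : IsStarProjection P) (a b : ℝ) :
    traceNorm (a • P + b • (1 - P)) = |a| * P.trace.re + |b| * (1 - P).trace.re := by
  rw [traceNorm_eq_re_trace_of_mul_self_eq
    (hP.smul_add_smul_one_sub_nonneg (abs_nonneg a) (abs_nonneg b))]
  · simp only [trace_add, trace_smul, Complex.add_re, Complex.real_smul, Complex.re_ofReal_mul]
  · rw [(hP.isHermitian_smul_add_smul_one_sub a b).eq, hP.smul_add_smul_one_sub_mul_self,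
      hP.smul_add_smul_one_sub_mul_self, abs_mul_abs_self, abs_mul_abs_self]

end TraceNorm

section MaximallyCoherentMixedState

variable {d : ℕ}

noncomputable def projPhi (d : ℕ) : Matrix (Fin d) (Fin d) ℂ :=
  vecMulVec (phi d) (star (phi d))

theorem projPhi_apply (i j : Fin d) : projPhi d i j = (d : ℂ)⁻¹ := by
  simp only [projPhi, vecMulVec_apply, Pi.star_apply, phi, star_inv₀, Complex.star_def,
    Complex.conj_ofReal]
  rw [← mul_inv, ← Complex.ofReal_mul, Real.mul_self_sqrt (Nat.cast_nonneg d),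
    Complex.ofReal_natCast]

theorem trace_projPhi (hd : d ≠ 0) : (projPhi d).trace = 1 := by
  simp [trace, projPhi_apply, hd]

theorem star_phi_dotProduct_phi (hd : d ≠ 0) : star (phi d) ⬝ᵥ phi d = 1 := by
  rw [dotProduct_comm, ← trace_vecMulVec, ← projPhi, trace_projPhi hd]

theorem isStarProjection_projPhi (hd : d ≠ 0) : IsStarProjection (projPhi d) :=
  isStarProjection_vecMulVec_star (star_phi_dotProduct_phi hd)

theorem trace_projPhi_mul_of_isDiag {δ : Matrix (Fin d) (Fin d) ℂ} (hδ : δ.IsDiag) :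
    (projPhi d * δ).trace = (d : ℂ)⁻¹ * δ.trace := by
  rw [← hδ.diagonal_diag, trace_diagonal, Finset.mul_sum]
  simp only [trace, diag_apply, mul_diagonal, projPhi_apply]

theorem mcms_eq_smul_projPhi_add_smul (p : ℝ) :
    mcms d p = (p + (1 - p) / d) • projPhi d + ((1 - p) / d) • (1 - projPhi d) := by
  rw [mcms, projPhi]
  module

theorem trace_mcms (hd : d ≠ 0) (p : ℝ) : (mcms d p).trace = 1 := by
  rw [mcms, trace_add, trace_smul, trace_smul, ← projPhi, trace_projPhi hd, trace_one,
    Fintype.card_fin]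
  have hd' : (d : ℂ) ≠ 0 := Nat.cast_ne_zero.mpr hd
  simp only [Complex.real_smul, Complex.ofReal_div, Complex.ofReal_sub, Complex.ofReal_one,
    Complex.ofReal_natCast, mul_one]
  field_simp
  ring

theorem trace_projPhi_mul_mcms (hd : d ≠ 0) (p : ℝ) :
    (projPhi d * mcms d p).trace = (p + (1 - p) / d : ℝ) := by
  rw [mcms, ← projPhi, mul_add, mul_smul_comm, mul_smul_comm,
    (isStarProjection_projPhi hd).isIdempotentElem.eq, mul_one, ← add_smul, trace_smul,
    trace_projPhi hd]
  simp

theorem traceNorm_mcms_sub_smul_one (hd : d ≠ 0) (p c : ℝ) :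
    traceNorm (mcms d p - c • 1) = |p + (1 - p) / d - c| + |(1 - p) / d - c| * (d - 1) := by
  have hJ := isStarProjection_projPhi hd
  have hA : mcms d p - c • 1
      = (p + (1 - p) / d - c) • projPhi d + ((1 - p) / d - c) • (1 - projPhi d) := by
    rw [mcms_eq_smul_projPhi_add_smul]
    module
  rw [hA, hJ.traceNorm_smul_add_smul_one_sub, trace_sub, trace_one, trace_projPhi hd]
  simp

theorem traceNorm_mcms_sub_inv_smul_one (hd : d ≠ 0) {p : ℝ} (hp : 0 ≤ p) :
    traceNorm (mcms d p - (d : ℝ)⁻¹ • 1) = 2 * p * (d - 1) / d := by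
  have hd₁ : (1 : ℝ) ≤ d := by exact_mod_cast Nat.one_le_iff_ne_zero.mpr hd
  have hd₀ : (d : ℝ) ≠ 0 := by positivity
  rw [traceNorm_mcms_sub_smul_one hd,
    show p + (1 - p) / d - (d : ℝ)⁻¹ = p * (d - 1) / d by field_simp; ring,
    show (1 - p) / d - (d : ℝ)⁻¹ = -(p / d) by field_simp; ring, abs_neg,
    abs_of_nonneg (by positivity), abs_of_nonneg (by positivity)]
  ring

theorem le_traceNorm_mcms_sub_smul (hd : 2 ≤ d) (p l : ℝ) {δ : Matrix (Fin d) (Fin d) ℂ}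
    (hδ : δ.PosSemidef) (hδ₁ : δ.trace = 1) (hδd : δ.IsDiag) :
    p ≤ traceNorm (mcms d p - l • δ) := by
  have hd₀ : (d : ℝ) ≠ 0 := by positivity
  have hJ := isStarProjection_projPhi (d := d) (by omega)
  set J := projPhi d
  set A := mcms d p - l • δ
  have hA : A.IsHermitian :=
    (mcms_eq_smul_projPhi_add_smul (d := d) p ▸ hJ.isHermitian_smul_add_smul_one_sub _ _).sub
      (hδ.isHermitian.smul (.all l))
  have htrA : A.trace.re = 1 - l := by
    simp [A, trace_sub, trace_mcms (d := d) (by omega), hδ₁]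
  have htrJA : (J * A).trace.re = p + (1 - p - l) / d := by
    rw [mul_sub, trace_sub, mul_smul_comm, trace_smul, trace_projPhi_mul_mcms (by omega),
      trace_projPhi_mul_of_isDiag hδd, hδ₁]
    simp only [mul_one, Complex.sub_re, Complex.ofReal_re, Complex.real_smul,
      Complex.re_ofReal_mul, ← Complex.ofReal_natCast, ← Complex.ofReal_inv]
    field_simp
    ring
  rcases le_or_gt l (1 - p) with hl | hl
  · have h := re_trace_mul_le_traceNorm hA (neg_le_self zero_le_one) le_rfl
    rw [one_mul, htrA] at h
    linarith
  · have h := re_trace_mul_le_traceNorm hA (B := J - (1 - J))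
      (by simpa using sub_le_sub hJ.nonneg (sub_le_self 1 hJ.nonneg))
      (by simpa using sub_le_sub hJ.le_one hJ.one_sub_nonneg)
    rw [sub_mul, sub_mul, one_mul, trace_sub, trace_sub, Complex.sub_re, Complex.sub_re, htrA,
      htrJA] at h
    have h2d : 2 / (d : ℝ) ≤ 1 := by rw [div_le_one (by positivity)]; exact_mod_cast hd
    calc p ≤ p + (l - (1 - p)) * (1 - 2 / d) :=
          le_add_of_nonneg_right (mul_nonneg (by linarith) (by linarith))
      _ = p + (1 - p - l) / d - (1 - l - (p + (1 - p - l) / d)) := by field_simp; ring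
      _ ≤ traceNorm A := h

theorem isLeast_traceNorm_mcms_sub_smul (hd : 2 ≤ d) {p : ℝ} (hp₀ : 0 ≤ p) (hp₁ : p ≤ 1) :
    IsLeast {x : ℝ | ∃ (l : ℝ) (δ : Matrix (Fin d) (Fin d) ℂ),
      0 ≤ l ∧ δ.PosSemidef ∧ δ.trace = 1 ∧ δ.IsDiag ∧ x = traceNorm (mcms d p - l • δ)} p := by
  have hd₀ : (d : ℝ) ≠ 0 := by positivity
  refine ⟨⟨1 - p, (d : ℝ)⁻¹ • 1, by linarith, PosSemidef.one.smul (by positivity), ?_,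
    isDiag_one.smul _, ?_⟩, ?_⟩
  · have hdC : (d : ℂ) ≠ 0 := by exact_mod_cast hd₀
    simp [trace_smul, hdC]
  · rw [smul_smul, traceNorm_mcms_sub_smul_one (by omega)]
    rw [div_eq_mul_inv, add_sub_cancel_right, sub_self, abs_zero, zero_mul, add_zero,
      abs_of_nonneg hp₀]
  · rintro x ⟨l, δ, -, hδ, hδ₁, hδd, rfl⟩
    exact le_traceNorm_mcms_sub_smul hd p l hδ hδ₁ hδd

end MaximallyCoherentMixedState

/-- Complementarity between coherence and mixedness for the maximally coherent
mixed state: `C'_tr(ρ_m) + M_tr(ρ_m) = 1`. -/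
theorem coherence_add_mixedness_mcms {d : ℕ} (hd : 2 ≤ d) (p : ℝ)
    (hp0 : 0 < p) (hp1 : p ≤ 1) :
    sInf {x : ℝ | ∃ (l : ℝ) (δ : Matrix (Fin d) (Fin d) ℂ),
        0 ≤ l ∧ δ.PosSemidef ∧ δ.trace = 1 ∧ δ.IsDiag ∧
        x = traceNorm (mcms d p - l • δ)}
      + (1 - ((d : ℝ) / (2 * ((d : ℝ) - 1)))
          * traceNorm (mcms d p - ((d : ℝ)⁻¹) • 1)) = 1 := by
  have hd₁ : (d : ℝ) - 1 ≠ 0 := by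
    have : (2 : ℝ) ≤ d := by exact_mod_cast hd
    linarith
  rw [(isLeast_traceNorm_mcms_sub_smul hd hp0.le hp1).csInf_eq,
    traceNorm_mcms_sub_inv_smul_one (by omega) hp0.le]
  field_simp
  ring
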